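/- If there exists a conditional pmf p(u|x,y) such that both Markov chains U−X−Y and U−Y−X hold (i.e., I(U;Y|X)=0 and I(U;X|Y)=0) and I(X;Y) ≤ I(X;U) + I(Y;U), then min over p(u|x,y) of max{I(X;Y|U), I(X,Y;U)} = I(X;Y)/2. -/

import Mathlib

open Finset

def IsPMF {Ω : Type*} [Fintype Ω] (p : Ω → ℝ) : Prop :=
  (∀ ω, 0 ≤ p ω) ∧ ∑ ω, p ω = 1

noncomputable def pr {Ω : Type*} [Fintype Ω] {α : Type*} [Fintype α] [DecidableEq α]
    (p : Ω → ℝ) (X : Ω → α) (x : α) : ℝ :=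
  ∑ ω ∈ Finset.univ.filter (fun ω => X ω = x), p ω

/-- Shannon entropy (base 2) of the random variable `X` under `p`. -/
noncomputable def ent {Ω : Type*} [Fintype Ω] {α : Type*} [Fintype α] [DecidableEq α]
    (p : Ω → ℝ) (X : Ω → α) : ℝ :=
  -∑ x, pr p X x * Real.logb 2 (pr p X x)

/-- Conditional entropy H(X | U). -/
noncomputable def centH {Ω : Type*} [Fintype Ω] {α β : Type*} [Fintype α] [DecidableEq α]
    [Fintype β] [DecidableEq β] (p : Ω → ℝ) (X : Ω → α) (U : Ω → β) : ℝ :=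
  ent p (fun ω => (X ω, U ω)) - ent p U

/-- Mutual information I(X;Y). -/
noncomputable def mi {Ω : Type*} [Fintype Ω] {α β : Type*} [Fintype α] [DecidableEq α]
    [Fintype β] [DecidableEq β] (p : Ω → ℝ) (X : Ω → α) (Y : Ω → β) : ℝ :=
  ent p X + ent p Y - ent p (fun ω => (X ω, Y ω))

/-- Conditional mutual information I(X;Y|U). -/
noncomputable def cmi {Ω : Type*} [Fintype Ω] {α β γ : Type*} [Fintype α] [DecidableEq α]
    [Fintype β] [DecidableEq β] [Fintype γ] [DecidableEq γ]
    (p : Ω → ℝ) (X : Ω → α) (Y : Ω → β) (U : Ω → γ) : ℝ :=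
  centH p X U + centH p Y U - centH p (fun ω => (X ω, Y ω)) U

def IndepRV {Ω : Type*} [Fintype Ω] {α β : Type*} [Fintype α] [DecidableEq α]
    [Fintype β] [DecidableEq β] (p : Ω → ℝ) (X : Ω → α) (Y : Ω → β) : Prop :=
  ∀ x y, pr p (fun ω => (X ω, Y ω)) (x, y) = pr p X x * pr p Y y

/-- A conditional pmf `w(u|x,y)`. -/
def CondPMF {X Y U : Type*} [Fintype U] (w : X → Y → U → ℝ) : Prop :=
  (∀ x y u, 0 ≤ w x y u) ∧ ∀ x y, ∑ u, w x y u = 1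

/-- The joint pmf `q(x,y) w(u|x,y)` on `X × Y × U`. -/
noncomputable def jointQ {X Y U : Type*} (q : X × Y → ℝ) (w : X → Y → U → ℝ) :
    X × Y × U → ℝ := fun ω => q (ω.1, ω.2.1) * w ω.1 ω.2.1 ω.2.2

/-- I(X;Y|U) under the joint pmf `q(x,y) w(u|x,y)`. -/
noncomputable def cmiXY {X Y U : Type*} [Fintype X] [DecidableEq X] [Fintype Y] [DecidableEq Y]
    [Fintype U] [DecidableEq U] (q : X × Y → ℝ) (w : X → Y → U → ℝ) : ℝ :=
  cmi (jointQ q w) (fun ω => ω.1) (fun ω => ω.2.1) (fun ω => ω.2.2)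

/-- I(X,Y;U) under the joint pmf `q(x,y) w(u|x,y)`. -/
noncomputable def miXYU {X Y U : Type*} [Fintype X] [DecidableEq X] [Fintype Y] [DecidableEq Y]
    [Fintype U] [DecidableEq U] (q : X × Y → ℝ) (w : X → Y → U → ℝ) : ℝ :=
  mi (jointQ q w) (fun ω => (ω.1, ω.2.1)) (fun ω => ω.2.2)

/-!
Two identities carry the argument:
`I(X;Y|U) + I(X,Y;U) = I(X;Y) + I(U;Y|X) + I(U;X|Y)` and
`I(X;Y|U) - I(X,Y;U) = I(X;Y) - I(X;U) - I(Y;U)`.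
Since conditional mutual information is nonnegative, the first gives
`max {I(X;Y|U), I(X,Y;U)} ≥ I(X;Y)/2` for every `p(u|x,y)`.
For the given double-Markov `w`, the second gives `I(X;Y|U) ≤ I(X;Y)/2`. Now mix `w` with
the kernel that makes `U` constant. Conditional mutual information is convex along mixtures
that fix the law of the conditioning pair, so both Markov chains survive the mixing, and by the
first identity `I(X;Y|U) + I(X,Y;U) = I(X;Y)` along the whole segment. At the constant end
`I(X;Y|U) = I(X;Y)`, so by the intermediate value theorem some mixture has
`I(X;Y|U) = I(X,Y;U) = I(X;Y)/2`.
-/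

open Real

section Pr

variable {Ω α β γ : Type*} [Fintype Ω] [Fintype α] [DecidableEq α] [Fintype β] [DecidableEq β]
  [Fintype γ] [DecidableEq γ] {p : Ω → ℝ}

lemma pr_nonneg (hp : ∀ ω, 0 ≤ p ω) (Z : Ω → α) (z : α) : 0 ≤ pr p Z z :=
  sum_nonneg fun ω _ => hp ω

variable (p) in
lemma sum_pr (Z : Ω → α) : ∑ z, pr p Z z = ∑ ω, p ω :=
  sum_fiberwise _ _ _

variable (p) in
lemma sum_mul_comp_eq_sum_pr_mul (Z : Ω → α) (f : α → ℝ) :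
    ∑ ω, p ω * f (Z ω) = ∑ z, pr p Z z * f z := by
  simp only [pr, sum_mul]
  rw [← sum_fiberwise univ Z]
  exact sum_congr rfl fun z _ => sum_congr rfl fun ω hω => by rw [(mem_filter.1 hω).2]

variable (p) in
lemma pr_comp_of_injective {φ : α → β} (hφ : φ.Injective) (Z : Ω → α) (z : α) :
    pr p (fun ω => φ (Z ω)) (φ z) = pr p Z z := by
  simp only [pr, hφ.eq_iff]

lemma pr_mono (hp : ∀ ω, 0 ≤ p ω) {Z : Ω → α} {W : Ω → β} {z : α} {v : β}
    (h : ∀ ω, Z ω = z → W ω = v) : pr p Z z ≤ pr p W v :=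
  sum_le_sum_of_subset_of_nonneg (fun ω hω => by simp_all) fun ω _ _ => hp ω

variable (p) in
lemma sum_pr_pair_left (A : Ω → α) (C : Ω → γ) (c : γ) :
    ∑ a, pr p (fun ω => (A ω, C ω)) (a, c) = pr p C c := by
  rw [pr, ← sum_fiberwise (univ.filter fun ω => C ω = c) A]
  simp only [pr, filter_filter, Prod.mk.injEq, and_comm]

lemma pr_add_mul (p₁ p₀ : Ω → ℝ) (s t : ℝ) (Z : Ω → α) (z : α) :
    pr (fun ω => s * p₁ ω + t * p₀ ω) Z z = s * pr p₁ Z z + t * pr p₀ Z z := by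
  simp only [pr, sum_add_distrib, mul_sum]

lemma pr_pair_of_ae_const {U : Ω → γ} {c : γ} (hU : ∀ ω, U ω ≠ c → p ω = 0)
    (Z : Ω → α) (a : α) (u : γ) :
    pr p (fun ω => (Z ω, U ω)) (a, u) = if u = c then pr p Z a else 0 := by
  simp only [pr, sum_filter, Prod.mk.injEq]
  split_ifs with hu
  · refine sum_congr rfl fun ω _ => ?_
    by_cases h : U ω = c <;> simp [h, hu, hU]
  · exact sum_eq_zero fun ω _ => by
      by_cases h : U ω = u <;> simp_all

end Pr

section Entropy

variable {Ω α β γ : Type*} [Fintype Ω] [Fintype α] [DecidableEq α] [Fintype β] [DecidableEq β]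
  [Fintype γ] [DecidableEq γ] (p : Ω → ℝ)

lemma ent_mul_log_two (Z : Ω → α) :
    ent p Z * log 2 = -∑ ω, p ω * log (pr p Z (Z ω)) := by
  have hl : log 2 ≠ 0 := (log_pos one_lt_two).ne'
  rw [ent, sum_mul_comp_eq_sum_pr_mul p Z fun z => log (pr p Z z), neg_mul, sum_mul]
  simp only [logb, mul_assoc, div_mul_cancel₀ _ hl]

lemma ent_comp_of_injective {φ : α → β} (hφ : φ.Injective) (Z : Ω → α) :
    ent p (fun ω => φ (Z ω)) = ent p Z := by
  have hl : log 2 ≠ 0 := (log_pos one_lt_two).ne'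
  rw [← mul_left_inj' hl, ent_mul_log_two, ent_mul_log_two]
  simp only [pr_comp_of_injective p hφ]

lemma ent_swap (A : Ω → α) (B : Ω → β) :
    ent p (fun ω => (B ω, A ω)) = ent p (fun ω => (A ω, B ω)) :=
  ent_comp_of_injective p Prod.swap_injective fun ω => (A ω, B ω)

lemma ent_congr {Ω' : Type*} [Fintype Ω'] {p' : Ω' → ℝ} {Z : Ω → α} {Z' : Ω' → α}
    (h : ∀ z, pr p Z z = pr p' Z' z) : ent p Z = ent p' Z' := by
  simp only [ent, h]

lemma ent_pair_of_ae_const {U : Ω → γ} {c : γ} (hU : ∀ ω, U ω ≠ c → p ω = 0) (Z : Ω → α) :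
    ent p (fun ω => (Z ω, U ω)) = ent p Z := by
  rw [ent, ent, Fintype.sum_prod_type]
  congr 1
  refine sum_congr rfl fun a _ => ?_
  rw [Fintype.sum_eq_single c fun u hu => by simp [pr_pair_of_ae_const hU, hu]]
  simp [pr_pair_of_ae_const hU]

lemma ent_eq_zero_of_ae_const (hp : ∑ ω, p ω = 1) {U : Ω → γ} {c : γ}
    (hU : ∀ ω, U ω ≠ c → p ω = 0) : ent p U = 0 := by
  rw [← ent_comp_of_injective p (φ := fun u => ((), u)) (fun _ _ h => (Prod.mk.inj h).2),
    ent_pair_of_ae_const p hU]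
  simp [ent, pr, hp]

lemma continuous_ent {P : ℝ → Ω → ℝ} (hP : ∀ ω, Continuous fun t => P t ω) (Z : Ω → α) :
    Continuous fun t => ent (P t) Z := by
  have hpr (z : α) : Continuous fun t => pr (P t) Z z := continuous_finsetSum _ fun ω _ => hP ω
  simp only [ent, logb, mul_div_assoc']
  fun_prop

end Entropy

section AeConst

variable {Ω α β γ : Type*} [Fintype Ω] [Fintype α] [DecidableEq α] [Fintype β] [DecidableEq β]
  [Fintype γ] [DecidableEq γ] {p : Ω → ℝ} {U : Ω → α} {c : α}

lemma mi_eq_zero_of_ae_const_right (hp : ∑ ω, p ω = 1) (hU : ∀ ω, U ω ≠ c → p ω = 0)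
    (Z : Ω → β) : mi p Z U = 0 := by
  rw [mi, ent_pair_of_ae_const p hU, ent_eq_zero_of_ae_const p hp hU]
  ring

lemma cmi_eq_zero_of_ae_const_left (hU : ∀ ω, U ω ≠ c → p ω = 0) (B : Ω → β) (C : Ω → γ) :
    cmi p U B C = 0 := by
  have hUC : ent p (fun ω => (U ω, C ω)) = ent p C := by
    rw [← ent_swap, ent_pair_of_ae_const p hU]
  have hUBC : ent p (fun ω => ((U ω, B ω), C ω)) = ent p (fun ω => (B ω, C ω)) := by
    rw [← ent_pair_of_ae_const p hU fun ω => (B ω, C ω)]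
    exact ent_comp_of_injective p (φ := fun x : (β × γ) × α => ((x.2, x.1.1), x.1.2))
      (fun x y h => by simp_all [Prod.ext_iff]) fun ω => ((B ω, C ω), U ω)
  rw [cmi, centH, centH, centH, hUC, hUBC]
  ring

end AeConst

section KL

variable {ι : Type*} [Fintype ι]

-- Since `log 0 = 0`, this is the Kullback–Leibler divergence only when `b i = 0 → a i = 0`.
noncomputable def klSum (a b : ι → ℝ) : ℝ :=
  ∑ i, a i * (log (a i) - log (b i))

lemma sub_le_mul_log_sub_log {a b : ℝ} (ha : 0 ≤ a) (hb : 0 ≤ b) (hab : b = 0 → a = 0) :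
    a - b ≤ a * (log a - log b) := by
  rcases ha.eq_or_lt with rfl | ha
  · simpa using hb
  have hb : 0 < b := hb.lt_of_ne fun h => ha.ne' (hab h.symm)
  have key := log_le_sub_one_of_pos (div_pos hb ha)
  rw [log_div hb.ne' ha.ne'] at key
  have := mul_le_mul_of_nonneg_left key ha.le
  rw [mul_sub_one, mul_div_cancel₀ _ ha.ne'] at this
  linarith

lemma klSum_nonneg {a b : ι → ℝ} (ha : ∀ i, 0 ≤ a i) (hb : ∀ i, 0 ≤ b i)
    (hab : ∀ i, b i = 0 → a i = 0) (hsum : ∑ i, b i ≤ ∑ i, a i) : 0 ≤ klSum a b := by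
  have : ∑ i, (a i - b i) ≤ klSum a b :=
    sum_le_sum fun i _ => sub_le_mul_log_sub_log (ha i) (hb i) (hab i)
  rw [sum_sub_distrib] at this
  linarith

lemma mul_log_sub_log_mul {a b s r : ℝ} (ha : 0 ≤ a) (hb : 0 ≤ b) (hab : b = 0 → a = 0)
    (hs : 0 < s) (hr : 0 < r) :
    a * (log (a * s) - log (b * r)) = a * (log a - log b) + a * (log s - log r) := by
  rcases ha.eq_or_lt with rfl | ha
  · simp
  have hb : 0 < b := hb.lt_of_ne fun h => ha.ne' (hab h.symm)
  rw [log_mul ha.ne' hs.ne', log_mul hb.ne' hr.ne']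
  ring

/-- The log-sum inequality for two terms. -/
lemma add_mul_log_sub_log_le {a₁ a₂ b₁ b₂ : ℝ} (ha₁ : 0 ≤ a₁) (ha₂ : 0 ≤ a₂) (hb₁ : 0 ≤ b₁)
    (hb₂ : 0 ≤ b₂) (h₁ : b₁ = 0 → a₁ = 0) (h₂ : b₂ = 0 → a₂ = 0) :
    (a₁ + a₂) * (log (a₁ + a₂) - log (b₁ + b₂)) ≤
      a₁ * (log a₁ - log b₁) + a₂ * (log a₂ - log b₂) := by
  rcases (add_nonneg hb₁ hb₂).eq_or_lt with hB | hB
  · obtain ⟨rfl, rfl⟩ : b₁ = 0 ∧ b₂ = 0 := ⟨by linarith, by linarith⟩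
    simp [h₁ rfl, h₂ rfl]
  rcases (add_nonneg ha₁ ha₂).eq_or_lt with hA | hA
  · obtain ⟨rfl, rfl⟩ : a₁ = 0 ∧ a₂ = 0 := ⟨by linarith, by linarith⟩
    simp
  -- Gibbs' inequality for the pairs `aᵢ (b₁ + b₂)` and `bᵢ (a₁ + a₂)`, which have equal sums.
  have hi (a b : ℝ) (ha : 0 ≤ a) (hb : 0 ≤ b) (hab : b = 0 → a = 0) :
      a * (b₁ + b₂) - b * (a₁ + a₂) ≤ (b₁ + b₂) * (a * (log a - log b)
        + a * (log (b₁ + b₂) - log (a₁ + a₂))) := by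
    have := sub_le_mul_log_sub_log (mul_nonneg ha hB.le) (mul_nonneg hb hA.le)
      fun h => by simp [(mul_eq_zero.1 h).resolve_right hA.ne', hab]
    rw [mul_right_comm, mul_log_sub_log_mul ha hb hab hB hA] at this
    linarith
  have := add_le_add (hi a₁ b₁ ha₁ hb₁ h₁) (hi a₂ b₂ ha₂ hb₂ h₂)
  nlinarith

lemma mul_mul_log_sub_log_mul {s a b : ℝ} (hs : 0 ≤ s) (ha : 0 ≤ a) (hb : 0 ≤ b)
    (hab : b = 0 → a = 0) :
    s * a * (log (s * a) - log (s * b)) = s * (a * (log a - log b)) := by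
  rcases hs.eq_or_lt with rfl | hs
  · simp
  rw [mul_comm s a, mul_comm s b, mul_right_comm, mul_log_sub_log_mul ha hb hab hs hs]
  ring

lemma klSum_mix_le {a₁ a₂ b₁ b₂ : ι → ℝ} {s t : ℝ} (hs : 0 ≤ s) (ht : 0 ≤ t)
    (ha₁ : ∀ i, 0 ≤ a₁ i) (ha₂ : ∀ i, 0 ≤ a₂ i) (hb₁ : ∀ i, 0 ≤ b₁ i) (hb₂ : ∀ i, 0 ≤ b₂ i)
    (h₁ : ∀ i, b₁ i = 0 → a₁ i = 0) (h₂ : ∀ i, b₂ i = 0 → a₂ i = 0) :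
    klSum (fun i => s * a₁ i + t * a₂ i) (fun i => s * b₁ i + t * b₂ i) ≤
      s * klSum a₁ b₁ + t * klSum a₂ b₂ := by
  simp only [klSum, mul_sum, ← sum_add_distrib]
  refine sum_le_sum fun i _ => ?_
  rw [← mul_mul_log_sub_log_mul hs (ha₁ i) (hb₁ i) (h₁ i),
    ← mul_mul_log_sub_log_mul ht (ha₂ i) (hb₂ i) (h₂ i)]
  refine add_mul_log_sub_log_le (mul_nonneg hs (ha₁ i)) (mul_nonneg ht (ha₂ i))
    (mul_nonneg hs (hb₁ i)) (mul_nonneg ht (hb₂ i)) (fun h => ?_) (fun h => ?_)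
  · rcases mul_eq_zero.1 h with h | h <;> simp [h, h₁]
  · rcases mul_eq_zero.1 h with h | h <;> simp [h, h₂]

end KL

section CondMutualInfo

variable {Ω α β γ : Type*} [Fintype Ω] [Fintype α] [DecidableEq α] [Fintype β] [DecidableEq β]
  [Fintype γ] [DecidableEq γ] {p : Ω → ℝ}

/-- The law `p(a|c) p(b|c) p(c)`, under which `A` and `B` are conditionally independent
given `C`. -/
noncomputable def prCondIndep (p : Ω → ℝ) (A : Ω → α) (B : Ω → β) (C : Ω → γ)
    (z : α × β × γ) : ℝ :=
  pr p (fun ω => (A ω, C ω)) (z.1, z.2.2) * pr p (fun ω => (B ω, C ω)) (z.2.1, z.2.2) /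
    pr p C z.2.2

lemma prCondIndep_nonneg (hp : ∀ ω, 0 ≤ p ω) (A : Ω → α) (B : Ω → β) (C : Ω → γ)
    (z : α × β × γ) : 0 ≤ prCondIndep p A B C z :=
  div_nonneg (mul_nonneg (pr_nonneg hp _ _) (pr_nonneg hp _ _)) (pr_nonneg hp _ _)

lemma pr_eq_zero_of_prCondIndep_eq_zero (hp : ∀ ω, 0 ≤ p ω) (A : Ω → α) (B : Ω → β)
    (C : Ω → γ) {z : α × β × γ} (hz : prCondIndep p A B C z = 0) :
    pr p (fun ω => (A ω, B ω, C ω)) z = 0 := by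
  refine (pr_nonneg hp _ _).antisymm' ?_
  rcases div_eq_zero_iff.1 hz with hz | hz
  · rcases mul_eq_zero.1 hz with hz | hz <;> rw [← hz] <;>
      exact pr_mono hp fun ω h => by simp [← h]
  · rw [← hz]
    exact pr_mono hp fun ω h => by simp [← h]

variable (p) in
lemma sum_prCondIndep (A : Ω → α) (B : Ω → β) (C : Ω → γ) :
    ∑ z, prCondIndep p A B C z = ∑ ω, p ω := by
  rw [Fintype.sum_prod_type, sum_comm, ← sum_pr p C]
  simp only [Fintype.sum_prod_type]
  rw [sum_comm]
  refine sum_congr rfl fun c _ => ?_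
  simp only [prCondIndep, ← sum_div, ← sum_mul, ← mul_sum, sum_pr_pair_left, mul_self_div_self]

lemma cmi_mul_log_two_eq_klSum (hp : ∀ ω, 0 ≤ p ω) (A : Ω → α) (B : Ω → β) (C : Ω → γ) :
    cmi p A B C * log 2 =
      klSum (pr p fun ω => (A ω, B ω, C ω)) (prCondIndep p A B C) := by
  have hABC : ent p (fun ω => ((A ω, B ω), C ω)) = ent p (fun ω => (A ω, B ω, C ω)) :=
    ent_comp_of_injective p (Equiv.prodAssoc α β γ).symm.injective
      fun ω => (A ω, B ω, C ω)
  calc cmi p A B C * log 2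
      = ent p (fun ω => (A ω, C ω)) * log 2 + ent p (fun ω => (B ω, C ω)) * log 2
          - ent p (fun ω => (A ω, B ω, C ω)) * log 2 - ent p C * log 2 := by
        rw [cmi, centH, centH, centH, hABC]
        ring
    _ = ∑ ω, p ω * (log (pr p (fun ω => (A ω, B ω, C ω)) (A ω, B ω, C ω))
          + log (pr p C (C ω)) - log (pr p (fun ω => (A ω, C ω)) (A ω, C ω))
          - log (pr p (fun ω => (B ω, C ω)) (B ω, C ω))) := by
        simp only [ent_mul_log_two, mul_add, mul_sub, sum_add_distrib, sum_sub_distrib]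
        ring
    _ = ∑ z, pr p (fun ω => (A ω, B ω, C ω)) z * (log (pr p (fun ω => (A ω, B ω, C ω)) z)
          + log (pr p C z.2.2) - log (pr p (fun ω => (A ω, C ω)) (z.1, z.2.2))
          - log (pr p (fun ω => (B ω, C ω)) (z.2.1, z.2.2))) :=
        sum_mul_comp_eq_sum_pr_mul p (fun ω => (A ω, B ω, C ω)) fun z =>
          log (pr p (fun ω => (A ω, B ω, C ω)) z) + log (pr p C z.2.2)
            - log (pr p (fun ω => (A ω, C ω)) (z.1, z.2.2))
            - log (pr p (fun ω => (B ω, C ω)) (z.2.1, z.2.2))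
    _ = _ := by
        refine sum_congr rfl fun z _ => ?_
        rcases (pr_nonneg hp (fun ω => (A ω, B ω, C ω)) z).eq_or_lt with hz | hz
        · simp [← hz]
        have hAC := hz.trans_le (pr_mono hp (W := fun ω => (A ω, C ω)) (v := (z.1, z.2.2))
          fun ω h => by simp [← h])
        have hBC := hz.trans_le (pr_mono hp (W := fun ω => (B ω, C ω)) (v := (z.2.1, z.2.2))
          fun ω h => by simp [← h])
        have hC := hz.trans_le (pr_mono hp (W := C) (v := z.2.2) fun ω h => by simp [← h])
        rw [prCondIndep, log_div (by positivity) hC.ne', log_mul hAC.ne' hBC.ne']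
        ring

lemma cmi_nonneg (hp : ∀ ω, 0 ≤ p ω) (A : Ω → α) (B : Ω → β) (C : Ω → γ) :
    0 ≤ cmi p A B C := by
  have := klSum_nonneg (pr_nonneg hp _) (prCondIndep_nonneg hp A B C)
    (fun z => pr_eq_zero_of_prCondIndep_eq_zero hp A B C)
    (by rw [sum_prCondIndep, sum_pr])
  rw [← cmi_mul_log_two_eq_klSum hp] at this
  exact nonneg_of_mul_nonneg_left this (log_pos one_lt_two)

lemma prCondIndep_add_mul {p₁ p₀ : Ω → ℝ} {s t : ℝ} (hst : s + t = 1) (A : Ω → α)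
    (B : Ω → β) (C : Ω → γ)
    (hBC : ∀ z, pr p₀ (fun ω => (B ω, C ω)) z = pr p₁ (fun ω => (B ω, C ω)) z)
    (z : α × β × γ) :
    prCondIndep (fun ω => s * p₁ ω + t * p₀ ω) A B C z =
      s * prCondIndep p₁ A B C z + t * prCondIndep p₀ A B C z := by
  have hC (c : γ) : pr p₀ C c = pr p₁ C c := by
    simp only [← sum_pr_pair_left _ B C, hBC]
  simp only [prCondIndep, pr_add_mul, hBC, hC, ← add_mul, hst, one_mul]
  ring

lemma cmi_add_mul_le {p₁ p₀ : Ω → ℝ} (hp₁ : ∀ ω, 0 ≤ p₁ ω) (hp₀ : ∀ ω, 0 ≤ p₀ ω)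
    {s t : ℝ} (hs : 0 ≤ s) (ht : 0 ≤ t) (hst : s + t = 1) (A : Ω → α) (B : Ω → β)
    (C : Ω → γ) (hBC : ∀ z, pr p₀ (fun ω => (B ω, C ω)) z = pr p₁ (fun ω => (B ω, C ω)) z) :
    cmi (fun ω => s * p₁ ω + t * p₀ ω) A B C ≤ s * cmi p₁ A B C + t * cmi p₀ A B C := by
  have hp (ω : Ω) : 0 ≤ s * p₁ ω + t * p₀ ω :=
    add_nonneg (mul_nonneg hs (hp₁ ω)) (mul_nonneg ht (hp₀ ω))
  refine le_of_mul_le_mul_right ?_ (log_pos one_lt_two)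
  rw [add_mul, mul_assoc, mul_assoc, cmi_mul_log_two_eq_klSum hp, cmi_mul_log_two_eq_klSum hp₁,
    cmi_mul_log_two_eq_klSum hp₀, funext (pr_add_mul p₁ p₀ s t _),
    funext (prCondIndep_add_mul hst A B C hBC)]
  exact klSum_mix_le hs ht (pr_nonneg hp₁ _) (pr_nonneg hp₀ _)
    (prCondIndep_nonneg hp₁ A B C) (prCondIndep_nonneg hp₀ A B C)
    (fun _ => pr_eq_zero_of_prCondIndep_eq_zero hp₁ A B C)
    (fun _ => pr_eq_zero_of_prCondIndep_eq_zero hp₀ A B C)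

lemma cmi_add_mul_eq_zero {p₁ p₀ : Ω → ℝ} (hp₁ : ∀ ω, 0 ≤ p₁ ω) (hp₀ : ∀ ω, 0 ≤ p₀ ω)
    {s t : ℝ} (hs : 0 ≤ s) (ht : 0 ≤ t) (hst : s + t = 1) {A : Ω → α} {B : Ω → β}
    {C : Ω → γ} (hBC : ∀ z, pr p₀ (fun ω => (B ω, C ω)) z = pr p₁ (fun ω => (B ω, C ω)) z)
    (h₁ : cmi p₁ A B C = 0) (h₀ : cmi p₀ A B C = 0) :
    cmi (fun ω => s * p₁ ω + t * p₀ ω) A B C = 0 := by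
  have hp (ω : Ω) : 0 ≤ s * p₁ ω + t * p₀ ω :=
    add_nonneg (mul_nonneg hs (hp₁ ω)) (mul_nonneg ht (hp₀ ω))
  refine le_antisymm ?_ (cmi_nonneg hp A B C)
  simpa [h₁, h₀] using cmi_add_mul_le hp₁ hp₀ hs ht hst A B C hBC

lemma continuous_cmi {P : ℝ → Ω → ℝ} (hP : ∀ ω, Continuous fun t => P t ω) (A : Ω → α)
    (B : Ω → β) (C : Ω → γ) : Continuous fun t => cmi (P t) A B C := by
  simp only [cmi, centH]
  exact (((continuous_ent hP _).sub (continuous_ent hP _)).add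
    ((continuous_ent hP _).sub (continuous_ent hP _))).sub
    ((continuous_ent hP _).sub (continuous_ent hP _))

end CondMutualInfo

section Identities

variable {Ω α β γ : Type*} [Fintype Ω] [Fintype α] [DecidableEq α] [Fintype β] [DecidableEq β]
  [Fintype γ] [DecidableEq γ] (p : Ω → ℝ) (A : Ω → α) (B : Ω → β) (C : Ω → γ)

lemma cmi_add_mi_pair :
    cmi p A B C + mi p (fun ω => (A ω, B ω)) C = mi p A B + cmi p C B A + cmi p C A B := by
  have hCBA : ent p (fun ω => ((C ω, B ω), A ω)) = ent p (fun ω => ((A ω, B ω), C ω)) :=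
    ent_comp_of_injective p (φ := fun x : (α × β) × γ => ((x.2, x.1.2), x.1.1))
      (fun x y h => by simp_all [Prod.ext_iff]) fun ω => ((A ω, B ω), C ω)
  have hCAB : ent p (fun ω => ((C ω, A ω), B ω)) = ent p (fun ω => ((A ω, B ω), C ω)) :=
    ent_comp_of_injective p (φ := fun x : (α × β) × γ => ((x.2, x.1.1), x.1.2))
      (fun x y h => by simp_all [Prod.ext_iff]) fun ω => ((A ω, B ω), C ω)
  simp only [cmi, centH, mi]
  rw [hCBA, hCAB, ent_swap p A C, ent_swap p A B, ent_swap p B C]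
  ring

lemma cmi_sub_mi_pair :
    cmi p A B C - mi p (fun ω => (A ω, B ω)) C = mi p A B - mi p A C - mi p B C := by
  simp only [cmi, centH, mi]
  ring

end Identities

section JointQ

variable {X Y U : Type*} {q : X × Y → ℝ} {w w' : X → Y → U → ℝ}

lemma jointQ_nonneg [Fintype U] (hq : ∀ z, 0 ≤ q z) (hw : CondPMF w) (ω : X × Y × U) :
    0 ≤ jointQ q w ω :=
  mul_nonneg (hq _) (hw.1 _ _ _)

def diracKernel (X Y : Type*) {U : Type*} [DecidableEq U] (u₀ : U) : X → Y → U → ℝ :=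
  fun _ _ => Pi.single u₀ 1

lemma condPMF_diracKernel [Fintype U] [DecidableEq U] (u₀ : U) :
    CondPMF (diracKernel X Y u₀) :=
  ⟨fun _ _ u => by by_cases h : u = u₀ <;> simp [diracKernel, h], fun _ _ => by
    simp [diracKernel]⟩

lemma jointQ_diracKernel_eq_zero [DecidableEq U] {u₀ : U} (ω : X × Y × U) (hω : ω.2.2 ≠ u₀) :
    jointQ q (diracKernel X Y u₀) ω = 0 := by
  simp [jointQ, diracKernel, hω]

def mixKernel (t : ℝ) (w w' : X → Y → U → ℝ) : X → Y → U → ℝ :=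
  fun x y u => t * w x y u + (1 - t) * w' x y u

@[simp]
lemma mixKernel_one : mixKernel 1 w w' = w := by
  funext x y u
  simp [mixKernel]

@[simp]
lemma mixKernel_zero : mixKernel 0 w w' = w' := by
  funext x y u
  simp [mixKernel]

lemma condPMF_mixKernel [Fintype U] {t : ℝ} (ht : t ∈ Set.Icc 0 1) (hw : CondPMF w)
    (hw' : CondPMF w') : CondPMF (mixKernel t w w') :=
  ⟨fun x y u => add_nonneg (mul_nonneg ht.1 (hw.1 x y u))
      (mul_nonneg (sub_nonneg.2 ht.2) (hw'.1 x y u)),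
    fun x y => by simp only [mixKernel, sum_add_distrib, ← mul_sum, hw.2, hw'.2]; ring⟩

lemma jointQ_mixKernel (t : ℝ) :
    jointQ q (mixKernel t w w') = fun ω => t * jointQ q w ω + (1 - t) * jointQ q w' ω := by
  funext ω
  simp only [jointQ, mixKernel]
  ring

variable [Fintype X] [Fintype Y] [Fintype U]

lemma sum_jointQ (hw : ∀ x y, ∑ u, w x y u = 1) : ∑ ω, jointQ q w ω = ∑ z, q z := by
  simp only [jointQ, Fintype.sum_prod_type, ← mul_sum, hw, mul_one]

lemma pr_jointQ_comp {α : Type*} [Fintype α] [DecidableEq α] (hw : ∀ x y, ∑ u, w x y u = 1)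
    (f : X × Y → α) (a : α) : pr (jointQ q w) (fun ω => f (ω.1, ω.2.1)) a = pr q f a := by
  simp only [pr, sum_filter, Fintype.sum_prod_type, jointQ]
  refine sum_congr rfl fun x _ => sum_congr rfl fun y _ => ?_
  split_ifs <;> simp [← mul_sum, hw]

lemma ent_jointQ_comp {α : Type*} [Fintype α] [DecidableEq α] (hw : ∀ x y, ∑ u, w x y u = 1)
    (f : X × Y → α) : ent (jointQ q w) (fun ω => f (ω.1, ω.2.1)) = ent q f :=
  ent_congr _ (pr_jointQ_comp hw f)

lemma mi_jointQ [DecidableEq X] [DecidableEq Y] (hw : ∀ x y, ∑ u, w x y u = 1) :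
    mi (jointQ q w) (fun ω => ω.1) (fun ω => ω.2.1) = mi q Prod.fst Prod.snd := by
  rw [mi, mi, ent_jointQ_comp hw Prod.fst, ent_jointQ_comp hw Prod.snd,
    ent_jointQ_comp hw fun z => (z.1, z.2)]

end JointQ

section DoubleMarkov

variable {X Y U : Type*} [Fintype X] [DecidableEq X] [Fintype Y] [DecidableEq Y]
  [Fintype U] [DecidableEq U] {q : X × Y → ℝ} {w w' : X → Y → U → ℝ}

variable (q w) in
def DoubleMarkov : Prop :=
  cmi (jointQ q w) (fun ω => ω.2.2) (fun ω => ω.2.1) (fun ω => ω.1) = 0 ∧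
    cmi (jointQ q w) (fun ω => ω.2.2) (fun ω => ω.1) (fun ω => ω.2.1) = 0

lemma cmiXY_add_miXYU_of_doubleMarkov (hw : ∀ x y, ∑ u, w x y u = 1)
    (hM : DoubleMarkov q w) : cmiXY q w + miXYU q w = mi q Prod.fst Prod.snd := by
  rw [cmiXY, miXYU, cmi_add_mi_pair, mi_jointQ hw, hM.1, hM.2, add_zero, add_zero]

lemma cmiXY_le_of_doubleMarkov (hw : ∀ x y, ∑ u, w x y u = 1) (hM : DoubleMarkov q w)
    (hI : mi q Prod.fst Prod.snd ≤ mi (jointQ q w) (fun ω => ω.1) (fun ω => ω.2.2)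
      + mi (jointQ q w) (fun ω => ω.2.1) (fun ω => ω.2.2)) :
    cmiXY q w ≤ mi q Prod.fst Prod.snd / 2 := by
  have hdiff := cmi_sub_mi_pair (jointQ q w) (fun ω => ω.1) (fun ω => ω.2.1) fun ω => ω.2.2
  rw [mi_jointQ hw] at hdiff
  have hsum := cmiXY_add_miXYU_of_doubleMarkov hw hM
  rw [cmiXY, miXYU] at *
  linarith

lemma mi_div_two_le_max_cmiXY_miXYU (hq : ∀ z, 0 ≤ q z) (hw : CondPMF w) :
    mi q Prod.fst Prod.snd / 2 ≤ max (cmiXY q w) (miXYU q w) := by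
  have hsum := cmi_add_mi_pair (jointQ q w) (fun ω => ω.1) (fun ω => ω.2.1) fun ω => ω.2.2
  rw [mi_jointQ hw.2] at hsum
  have h₁ := cmi_nonneg (jointQ_nonneg hq hw) (fun ω => ω.2.2) (fun ω => ω.2.1) fun ω => ω.1
  have h₂ := cmi_nonneg (jointQ_nonneg hq hw) (fun ω => ω.2.2) (fun ω => ω.1) fun ω => ω.2.1
  have := le_max_left (cmiXY q w) (miXYU q w)
  have := le_max_right (cmiXY q w) (miXYU q w)
  rw [cmiXY, miXYU] at *
  linarith

lemma doubleMarkov_diracKernel (u₀ : U) : DoubleMarkov q (diracKernel X Y u₀) :=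
  ⟨cmi_eq_zero_of_ae_const_left jointQ_diracKernel_eq_zero _ _,
    cmi_eq_zero_of_ae_const_left jointQ_diracKernel_eq_zero _ _⟩

lemma cmiXY_diracKernel (hq : ∑ z, q z = 1) (u₀ : U) :
    cmiXY q (diracKernel X Y u₀) = mi q Prod.fst Prod.snd := by
  have hsum := cmiXY_add_miXYU_of_doubleMarkov (condPMF_diracKernel u₀).2
    (doubleMarkov_diracKernel (q := q) u₀)
  rwa [miXYU, mi_eq_zero_of_ae_const_right (by rw [sum_jointQ (condPMF_diracKernel u₀).2, hq])
    jointQ_diracKernel_eq_zero, add_zero] at hsum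

lemma DoubleMarkov.mixKernel (hq : ∀ z, 0 ≤ q z) {t : ℝ} (ht : t ∈ Set.Icc 0 1)
    (hw : CondPMF w) (hw' : CondPMF w') (hM : DoubleMarkov q w) (hM' : DoubleMarkov q w') :
    DoubleMarkov q (mixKernel t w w') := by
  rw [DoubleMarkov, jointQ_mixKernel]
  exact ⟨cmi_add_mul_eq_zero (jointQ_nonneg hq hw) (jointQ_nonneg hq hw') ht.1
      (sub_nonneg.2 ht.2) (add_sub_cancel t 1) (fun z =>
        (pr_jointQ_comp hw'.2 (fun v => (v.2, v.1)) z).trans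
          (pr_jointQ_comp hw.2 _ z).symm) hM.1 hM'.1,
    cmi_add_mul_eq_zero (jointQ_nonneg hq hw) (jointQ_nonneg hq hw') ht.1
      (sub_nonneg.2 ht.2) (add_sub_cancel t 1) (fun z =>
        (pr_jointQ_comp hw'.2 (fun v => (v.1, v.2)) z).trans
          (pr_jointQ_comp hw.2 _ z).symm) hM.2 hM'.2⟩

lemma continuous_cmiXY_mixKernel : Continuous fun t => cmiXY q (mixKernel t w w') := by
  unfold cmiXY
  exact continuous_cmi (P := fun t => jointQ q (mixKernel t w w'))
    (fun ω => by simp only [jointQ, mixKernel]; fun_prop) _ _ _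

end DoubleMarkov

lemma exists_condPMF_cmiXY_eq_half_and_miXYU_eq_half {X Y U : Type*} [Fintype X]
    [DecidableEq X] [Fintype Y] [DecidableEq Y] [Fintype U] [DecidableEq U] [Nonempty U]
    {q : X × Y → ℝ} (hq : IsPMF q) {w : X → Y → U → ℝ} (hw : CondPMF w)
    (hM : DoubleMarkov q w)
    (hI : mi q Prod.fst Prod.snd ≤ mi (jointQ q w) (fun ω => ω.1) (fun ω => ω.2.2)
      + mi (jointQ q w) (fun ω => ω.2.1) (fun ω => ω.2.2)) :
    ∃ v : X → Y → U → ℝ, CondPMF v ∧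
      cmiXY q v = mi q Prod.fst Prod.snd / 2 ∧ miXYU q v = mi q Prod.fst Prod.snd / 2 := by
  obtain ⟨u₀⟩ := ‹Nonempty U›
  have hpath (t : ℝ) (ht : t ∈ Set.Icc 0 1) :
      CondPMF (mixKernel t w (diracKernel X Y u₀)) ∧
        DoubleMarkov q (mixKernel t w (diracKernel X Y u₀)) :=
    ⟨condPMF_mixKernel ht hw (condPMF_diracKernel u₀),
      hM.mixKernel hq.1 ht hw (condPMF_diracKernel u₀) (doubleMarkov_diracKernel u₀)⟩
  have h₁ : cmiXY q (mixKernel 1 w (diracKernel X Y u₀)) ≤ mi q Prod.fst Prod.snd / 2 := by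
    simpa using cmiXY_le_of_doubleMarkov hw.2 hM hI
  have h₀ : cmiXY q (mixKernel 0 w (diracKernel X Y u₀)) = mi q Prod.fst Prod.snd := by
    simpa using cmiXY_diracKernel hq.2 u₀
  have hI₀ : 0 ≤ mi q Prod.fst Prod.snd :=
    h₀ ▸ cmi_nonneg (jointQ_nonneg hq.1 (hpath 0 (Set.left_mem_Icc.2 zero_le_one)).1) _ _ _
  obtain ⟨t, ht, hct⟩ := intermediate_value_Icc' zero_le_one
    continuous_cmiXY_mixKernel.continuousOn ⟨h₁, h₀.symm ▸ half_le_self hI₀⟩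
  refine ⟨_, (hpath t ht).1, hct, ?_⟩
  linarith [cmiXY_add_miXYU_of_doubleMarkov (hpath t ht).1.2 (hpath t ht).2]

/-- If there is a conditional pmf `w(u|x,y)` with `I(U;Y|X) = 0`, `I(U;X|Y) = 0`, and
`I(X;Y) ≤ I(X;U) + I(Y;U)`, then `min_p max{I(X;Y|U), I(X,Y;U)} = I(X;Y)/2`. -/
theorem stmt12 {X Y : Type*} [Fintype X] [DecidableEq X] [Fintype Y] [DecidableEq Y]
    (q : X × Y → ℝ) (hq : IsPMF q)
    (hexists : ∃ w : X → Y → Fin (Fintype.card X * Fintype.card Y + 2) → ℝ,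
      CondPMF w ∧
      cmi (jointQ q w) (fun ω => ω.2.2) (fun ω => ω.2.1) (fun ω => ω.1) = 0 ∧
      cmi (jointQ q w) (fun ω => ω.2.2) (fun ω => ω.1) (fun ω => ω.2.1) = 0 ∧
      mi q Prod.fst Prod.snd
        ≤ mi (jointQ q w) (fun ω => ω.1) (fun ω => ω.2.2)
          + mi (jointQ q w) (fun ω => ω.2.1) (fun ω => ω.2.2)) :
    sInf { z : ℝ | ∃ w : X → Y → Fin (Fintype.card X * Fintype.card Y + 2) → ℝ,
        CondPMF w ∧ z = max (cmiXY q w) (miXYU q w) }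
      = mi q Prod.fst Prod.snd / 2 := by
  obtain ⟨w, hw, hUYX, hUXY, hI⟩ := hexists
  obtain ⟨v, hv, hcmi, hmi⟩ :=
    exists_condPMF_cmiXY_eq_half_and_miXYU_eq_half hq hw ⟨hUYX, hUXY⟩ hI
  refine IsLeast.csInf_eq ⟨⟨v, hv, by rw [hcmi, hmi, max_self]⟩, ?_⟩
  rintro _ ⟨w', hw', rfl⟩
  exact mi_div_two_le_max_cmiXY_miXYU hq.1 hw'
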